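/- Let d ≥ 1, let Ω ⊆ ℝ^d be open, let x ∈ Ω, and let Φ : Ω → ℝ^d be four times continuously differentiable with DΦ(x) invertible. Then, as t → 0⁺ and uniformly over unit vectors θ ∈ ℝ^d, (Φ(x+tθ) − Φ(x))ᵀ·(DΦ(x)·DΦ(x)ᵀ)⁻¹·(Φ(x+tθ) − Φ(x)) = t² + (θᵀ·DΦ(x)⁻¹·D²Φ(x)(θ,θ))·t³ + O(t⁴). -/

import Mathlib

open Asymptotics Filter Topology Metric Matrix

/-- The Jacobian matrix `DΦ(u)` of `Φ : ℝ^d → ℝ^d` at `u`. -/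
noncomputable def jacobianMatrix {d : ℕ}
    (Φ : EuclideanSpace ℝ (Fin d) → EuclideanSpace ℝ (Fin d))
    (u : EuclideanSpace ℝ (Fin d)) : Matrix (Fin d) (Fin d) ℝ :=
  Matrix.of fun i j => fderiv ℝ Φ u (EuclideanSpace.single j 1) i

/-!
With `A = DΦ(x)⁻¹`, the quadratic form is `‖A (Φ(x+tθ) − Φ(x))‖²`. Second-order Taylor expansion
with a cubic remainder gives `A (Φ(x+tθ) − Φ(x)) = tθ + (t²/2) A D²Φ(x)(θ,θ) + O(t³)`, and
expanding the square of this vector of norm `t + O(t²)` leaves `t² + t³⟪θ, A D²Φ(x)(θ,θ)⟫ + O(t⁴)`.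
-/

open scoped RealInnerProductSpace

section Taylor

variable {E F : Type*} [NormedAddCommGroup E] [NormedSpace ℝ E]
  [NormedAddCommGroup F] [NormedSpace ℝ F]

theorem isBigO_sub_pow_succ_of_hasFDerivAt {f : E → F} {f' : E → E →L[ℝ] F} {x : E} {n : ℕ}
    (hf : ∀ᶠ y in 𝓝 x, HasFDerivAt f (f' y) y) (hf' : f' =O[𝓝 x] fun y ↦ ‖y - x‖ ^ n) :
    (fun y ↦ f y - f x) =O[𝓝 x] fun y ↦ ‖y - x‖ ^ (n + 1) := by
  obtain ⟨C, hC0, hC⟩ := hf'.exists_nonneg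
  obtain ⟨ε, hε, hball⟩ := Metric.eventually_nhds_iff_ball.1 (hf.and hC.bound)
  refine .of_bound C (eventually_of_mem (ball_mem_nhds x hε) fun y hy ↦ ?_)
  have hsub : closedBall x ‖y - x‖ ⊆ ball x ε := closedBall_subset_ball (by rwa [← dist_eq_norm])
  have hbound : ∀ w ∈ closedBall x ‖y - x‖, ‖f' w‖ ≤ C * ‖y - x‖ ^ n := fun w hw ↦ by
    have hwx : ‖w - x‖ ≤ ‖y - x‖ := by rwa [mem_closedBall, dist_eq_norm] at hw
    simpa using (hball w (hsub hw)).2.trans (by simp only [norm_pow, norm_norm]; gcongr)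
  have key := (convex_closedBall x ‖y - x‖).norm_image_sub_le_of_norm_hasFDerivWithin_le
    (fun w hw ↦ (hball w (hsub hw)).1.hasFDerivWithinAt) hbound
    (mem_closedBall_self (norm_nonneg _)) (by rw [mem_closedBall, dist_eq_norm])
  simpa [pow_succ, mul_assoc, norm_sub_rev x y] using key

theorem ContDiffAt.isBigO_sub_taylor_two {f : E → F} {x : E} (hf : ContDiffAt ℝ 3 f x) :
    (fun y ↦ f y - f x - fderiv ℝ f x (y - x) - (2⁻¹ : ℝ) • fderiv ℝ (fderiv ℝ f) x (y - x) (y - x))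
      =O[𝓝 x] fun y ↦ ‖y - x‖ ^ 3 := by
  set D₂ := fderiv ℝ (fderiv ℝ f) x
  have hf₁ : ContDiffAt ℝ 2 (fderiv ℝ f) x := hf.fderiv_right (by norm_num)
  have hf₂ : ContDiffAt ℝ 1 (fderiv ℝ (fderiv ℝ f)) x := hf₁.fderiv_right (by norm_num)
  have hO₁ : (fun y ↦ fderiv ℝ (fderiv ℝ f) y - D₂) =O[𝓝 x] fun y ↦ ‖y - x‖ ^ 1 := by
    simpa using ((hf₂.differentiableAt one_ne_zero).isBigO_sub).norm_right
  have hO₂ : (fun y ↦ fderiv ℝ f y - fderiv ℝ f x - D₂ (y - x)) =O[𝓝 x]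
      fun y ↦ ‖y - x‖ ^ 2 := by
    refine (isBigO_sub_pow_succ_of_hasFDerivAt (f := fun y ↦ fderiv ℝ f y - D₂ (y - x)) ?_
      hO₁).congr_left fun y ↦ by simp only [sub_self, map_zero, sub_zero]; abel
    filter_upwards [hf₁.eventually (by simp)] with y hy
    exact (hy.differentiableAt (by simp)).hasFDerivAt.sub
      (D₂.hasFDerivAt.comp y ((hasFDerivAt_id y).sub_const x))
  -- symmetry of `D₂` makes `D₂ (y - x)` the derivative of `y ↦ 2⁻¹ • D₂ (y - x) (y - x)`
  have hsymm : ∀ v w, D₂ v w = D₂ w v := hf.isSymmSndFDerivAt (by simp; norm_num)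
  refine (isBigO_sub_pow_succ_of_hasFDerivAt
    (f := fun y ↦ f y - fderiv ℝ f x (y - x) - (2⁻¹ : ℝ) • D₂ (y - x) (y - x)) ?_ hO₂).congr_left
      fun y ↦ by simp only [sub_self, map_zero, sub_zero, smul_zero]; abel
  filter_upwards [hf.eventually (by simp)] with y hy
  have hsub := (hasFDerivAt_id (𝕜 := ℝ) y).sub_const x
  have hquad := (D₂.hasFDerivAt.comp y hsub).clm_apply hsub
  convert ((hy.differentiableAt (by simp)).hasFDerivAt.sub
    ((fderiv ℝ f x).hasFDerivAt.comp y hsub)).sub (hquad.const_smul (2⁻¹ : ℝ)) using 1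
  · rfl
  ext v
  simp [hsymm v]
  module

theorem ContDiffAt.exists_norm_sub_taylor_two_smul_le {f : E → F} {x : E}
    (hf : ContDiffAt ℝ 3 f x) :
    ∃ M > (0 : ℝ), ∃ r > (0 : ℝ), ∀ t ∈ Set.Ico 0 r, ∀ θ : E, ‖θ‖ = 1 →
      ‖f (x + t • θ) - f x - t • fderiv ℝ f x θ - (t ^ 2 / 2) • fderiv ℝ (fderiv ℝ f) x θ θ‖
        ≤ M * t ^ 3 := by
  obtain ⟨M, hM, hTaylor⟩ := hf.isBigO_sub_taylor_two.exists_pos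
  obtain ⟨r, hr, hball⟩ := Metric.eventually_nhds_iff_ball.1 hTaylor.bound
  refine ⟨M, hM, r, hr, fun t ⟨ht₀, htr⟩ θ hθ ↦ ?_⟩
  have htθ : ‖t • θ‖ = t := by rw [norm_smul, hθ, Real.norm_of_nonneg ht₀, mul_one]
  have h := hball (x + t • θ) (by simpa [htθ] using htr)
  rw [add_sub_cancel_left, htθ, norm_pow, Real.norm_of_nonneg ht₀] at h
  convert h using 2
  simp only [map_smul, _root_.smul_apply, smul_smul]
  congr 2
  ring

end Taylor

theorem abs_norm_sq_sub_le_of_norm_sub_le {E : Type*} [NormedAddCommGroup E]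
    [InnerProductSpace ℝ E] {w θ u : E} {t K : ℝ} (hθ : ‖θ‖ = 1) (ht₀ : 0 ≤ t) (ht₁ : t ≤ 1)
    (hu : ‖u‖ ≤ K) (hw : ‖w - (t • θ + (t ^ 2 / 2) • u)‖ ≤ K * t ^ 3) :
    |‖w‖ ^ 2 - (t ^ 2 + ⟪θ, u⟫ * t ^ 3)| ≤ (2 * K + 1) ^ 2 * t ^ 4 := by
  set c := w - (t • θ + (t ^ 2 / 2) • u)
  set e := (t ^ 2 / 2) • u + c
  have hK : 0 ≤ K := (norm_nonneg u).trans hu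
  have hwe : w = t • θ + e := by simp only [e, c]; abel
  have hexp : ‖w‖ ^ 2 - (t ^ 2 + ⟪θ, u⟫ * t ^ 3) = 2 * t * ⟪θ, c⟫ + ‖e‖ ^ 2 := by
    rw [hwe, norm_add_sq_real, norm_smul, hθ, Real.norm_of_nonneg ht₀, real_inner_smul_left,
      inner_add_right, real_inner_smul_right]
    ring
  have hθc : |⟪θ, c⟫| ≤ K * t ^ 3 :=
    (abs_real_inner_le_norm θ c).trans (by rw [hθ, one_mul]; exact hw)
  have he : ‖e‖ ≤ 2 * K * t ^ 2 := by
    calc ‖e‖ ≤ t ^ 2 / 2 * ‖u‖ + ‖c‖ := by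
          refine (norm_add_le ((t ^ 2 / 2) • u) c).trans ?_
          rw [norm_smul, Real.norm_of_nonneg (by positivity : (0 : ℝ) ≤ t ^ 2 / 2)]
      _ ≤ t ^ 2 / 2 * K + K * t ^ 2 := by
          gcongr
          exact hw.trans (mul_le_mul_of_nonneg_left (pow_le_pow_of_le_one ht₀ ht₁ (by norm_num)) hK)
      _ ≤ 2 * K * t ^ 2 := by nlinarith [sq_nonneg t]
  rw [hexp]
  calc |2 * t * ⟪θ, c⟫ + ‖e‖ ^ 2| ≤ 2 * t * |⟪θ, c⟫| + ‖e‖ ^ 2 := by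
        refine (abs_add_le _ _).trans ?_
        rw [abs_mul, abs_of_nonneg (by positivity : 0 ≤ 2 * t), abs_of_nonneg (sq_nonneg ‖e‖)]
    _ ≤ 2 * t * (K * t ^ 3) + (2 * K * t ^ 2) ^ 2 := by gcongr
    _ ≤ (2 * K + 1) ^ 2 * t ^ 4 := by nlinarith [pow_nonneg ht₀ 4]

theorem toEuclideanCLM_jacobianMatrix {d : ℕ}
    (Φ : EuclideanSpace ℝ (Fin d) → EuclideanSpace ℝ (Fin d)) (u : EuclideanSpace ℝ (Fin d)) :
    toEuclideanCLM (𝕜 := ℝ) (jacobianMatrix Φ u) = fderiv ℝ Φ u := by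
  have : jacobianMatrix Φ u = LinearMap.toMatrix (EuclideanSpace.basisFun (Fin d) ℝ).toBasis
      (EuclideanSpace.basisFun (Fin d) ℝ).toBasis (fderiv ℝ Φ u) := by
    ext i j; simp [jacobianMatrix, LinearMap.toMatrix_apply]
  apply ContinuousLinearMap.coe_injective
  rw [coe_toEuclideanCLM_eq_toEuclideanLin, toEuclideanLin_eq_toLin_orthonormal, this,
    Matrix.toLin_toMatrix]

theorem dotProduct_inv_mul_transpose_mulVec {n : Type*} [Fintype n] [DecidableEq n]
    (J : Matrix n n ℝ) (v : EuclideanSpace ℝ n) :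
    v.ofLp ⬝ᵥ ((J * Jᵀ)⁻¹ *ᵥ v.ofLp) = ‖toEuclideanCLM (𝕜 := ℝ) J⁻¹ v‖ ^ 2 := by
  have : (J * Jᵀ)⁻¹ = star J⁻¹ * J⁻¹ := by
    rw [Matrix.mul_inv_rev, ← transpose_nonsing_inv, star_eq_conjTranspose,
      conjTranspose_eq_transpose_of_trivial]
  rw [← inner_toEuclideanCLM, this, map_mul, map_star, ContinuousLinearMap.star_eq_adjoint,
    mul_apply_eq_comp, ContinuousLinearMap.adjoint_inner_right, real_inner_self_eq_norm_sq]

theorem one_sided_mahalanobis_expansion_flat_general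
    (d : ℕ) (Ω : Set (EuclideanSpace ℝ (Fin d))) (hΩ : IsOpen Ω)
    (x : EuclideanSpace ℝ (Fin d)) (hx : x ∈ Ω)
    (Φ : EuclideanSpace ℝ (Fin d) → EuclideanSpace ℝ (Fin d))
    (hΦ : ContDiffOn ℝ 4 Φ Ω)
    (hJac : (jacobianMatrix Φ x).det ≠ 0) :
    ∃ C > (0 : ℝ), ∃ t₀ > (0 : ℝ), ∀ t ∈ Set.Ioo (0 : ℝ) t₀,
      ∀ θ : EuclideanSpace ℝ (Fin d), ‖θ‖ = 1 →
        |dotProduct (fun i => (Φ (x + t • θ) - Φ x) i)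
            (((jacobianMatrix Φ x * (jacobianMatrix Φ x)ᵀ)⁻¹).mulVec
              fun i => (Φ (x + t • θ) - Φ x) i)
          - (t ^ 2 +
              dotProduct (fun i => θ i)
                (((jacobianMatrix Φ x)⁻¹).mulVec
                  fun i => (iteratedFDeriv ℝ 2 Φ x ![θ, θ]) i) * t ^ 3)|
          ≤ C * t ^ 4 := by
  set A := toEuclideanCLM (𝕜 := ℝ) (jacobianMatrix Φ x)⁻¹
  set D₂ := fderiv ℝ (fderiv ℝ Φ) x
  have hA : ∀ v, A (fderiv ℝ Φ x v) = v := fun v ↦ by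
    rw [← toEuclideanCLM_jacobianMatrix, ← mul_apply_eq_comp, ← map_mul,
      nonsing_inv_mul _ (isUnit_iff_ne_zero.2 hJac), map_one, one_apply_eq_self]
  obtain ⟨M, hM, r, hr, hTaylor⟩ := ((hΦ.contDiffAt (hΩ.mem_nhds hx)).of_le
    (by norm_num)).exists_norm_sub_taylor_two_smul_le
  set K := ‖A‖ * (M + ‖D₂‖)
  refine ⟨(2 * K + 1) ^ 2, by positivity, min r 1, by positivity, fun t ⟨ht₀, ht⟩ θ hθ ↦ ?_⟩
  rw [dotProduct_inv_mul_transpose_mulVec, ← inner_toEuclideanCLM, iteratedFDeriv_two_apply]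
  simp only [Matrix.cons_val_zero, Matrix.cons_val_one]
  refine abs_norm_sq_sub_le_of_norm_sub_le hθ ht₀.le (ht.le.trans (min_le_right r 1)) ?_ ?_
  · refine A.le_opNorm_of_le ((D₂.le_opNorm₂ θ θ).trans_eq (by rw [hθ, mul_one, mul_one])) |>.trans ?_
    exact mul_le_mul_of_nonneg_left (by linarith) (norm_nonneg A)
  · have hrem : A (Φ (x + t • θ) - Φ x) - (t • θ + (t ^ 2 / 2) • A (D₂ θ θ)) =
        A (Φ (x + t • θ) - Φ x - t • fderiv ℝ Φ x θ - (t ^ 2 / 2) • D₂ θ θ) := by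
      simp only [map_sub, map_smul, hA]
      abel
    rw [hrem]
    refine A.le_opNorm_of_le (hTaylor t ⟨ht₀.le, ht.trans_le (min_le_left r 1)⟩ θ hθ) |>.trans ?_
    rw [← mul_assoc]
    exact mul_le_mul_of_nonneg_right (mul_le_mul_of_nonneg_left
      (le_add_of_nonneg_right (norm_nonneg D₂)) (norm_nonneg A)) (by positivity)

/-- one-sided Mahalanobis-type expansion: as `t → 0⁺`, uniformly
over unit vectors `θ`,
`(Φ(x+tθ) − Φ(x))ᵀ(DΦ(x)DΦ(x)ᵀ)⁻¹(Φ(x+tθ) − Φ(x))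
  = t² + (θᵀ DΦ(x)⁻¹ D²Φ(x)(θ,θ))·t³ + O(t⁴)`. -/
theorem one_sided_mahalanobis_expansion_flat
    (d : ℕ) (hd : 1 ≤ d) (Ω : Set (EuclideanSpace ℝ (Fin d))) (hΩ : IsOpen Ω)
    (x : EuclideanSpace ℝ (Fin d)) (hx : x ∈ Ω)
    (Φ : EuclideanSpace ℝ (Fin d) → EuclideanSpace ℝ (Fin d))
    (hΦ : ContDiffOn ℝ 4 Φ Ω)
    (hJac : (jacobianMatrix Φ x).det ≠ 0) :
    ∃ C > (0 : ℝ), ∃ t₀ > (0 : ℝ), ∀ t ∈ Set.Ioo (0 : ℝ) t₀,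
      ∀ θ : EuclideanSpace ℝ (Fin d), ‖θ‖ = 1 →
        |dotProduct (fun i => (Φ (x + t • θ) - Φ x) i)
            (((jacobianMatrix Φ x * (jacobianMatrix Φ x)ᵀ)⁻¹).mulVec
              fun i => (Φ (x + t • θ) - Φ x) i)
          - (t ^ 2 +
              dotProduct (fun i => θ i)
                (((jacobianMatrix Φ x)⁻¹).mulVec
                  fun i => (iteratedFDeriv ℝ 2 Φ x ![θ, θ]) i) * t ^ 3)|
          ≤ C * t ^ 4 :=
  one_sided_mahalanobis_expansion_flat_general d Ω hΩ x hx Φ hΦ hJac
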